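/- Let 1 < p < ∞ and for a, b in the unit sphere of ℓ_p² let Θ_{a,b} := B ∩ (B + (a+b)), where B is the closed unit ball of ℓ_p². If a, b, c are pairwise distinct elements of the unit sphere of ℓ_p² and b ∈ Θ_{a,c}, then Θ_{a,b} ⊆ Θ_{a,c}. -/

import Mathlib

/-- The set `Θ_{a,b} = B ∩ (B + (a + b))`, where `B` is the closed unit ball. -/
def Theta {E : Type*} [NormedAddCommGroup E] (a b : E) : Set E :=
  Metric.closedBall (0 : E) 1 ∩ ((fun z => z + (a + b)) '' Metric.closedBall (0 : E) 1)

/-!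
The argument works in any strictly convex normed plane, and `ℓ_p²` is one for `1 < p < ∞`.

If `x` and `x - d` (`d ≠ 0`) lie on the unit sphere `S`, strict convexity makes `[x - d, x]` the
whole chord of `B` through `x` in direction `d`. Sort three points of `S ∩ (S + d)` by a linear
functional vanishing on `d`: the segment joining the outer two meets the line `x + ℝ d` through
the middle one `x` at a point of `B ∩ (B + d)`, which is then `x` itself, and strict convexity
puts `x` at an end of that segment. Hence `S ∩ (S + (a + b)) = {a, b}`: on the arc `S \ {a}`,
parametrized by an angle, `b` separates the points inside `B + (a + b)` from those outside, and
likewise `c` for `B + (a + c)`. As `b` is inside `B + (a + c)` and `c` outside `B + (a + b)`,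
the intermediate value theorem puts every `z ∈ S ∩ (B + (a + b))` inside `B + (a + c)`; the
point reflection `x ↦ a + b - x` of `Θ_{a,b}` gives the same on `S + (a + b)`. Finally, a point
of `Θ_{a,b}` outside `B + (a + c)`, pushed away from `a + c`, reaches one of these two spheres
while staying outside `B + (a + c)`.
-/

open Set Real Metric Module

lemma abs_add_div_two_rpow_lt {q : ℝ} (hq : 1 < q) {s t : ℝ} (hst : s ≠ t) :
    |(s + t) / 2| ^ q < (|s| ^ q + |t| ^ q) / 2 := by
  rcases eq_or_ne |s| |t| with h | h
  · obtain rfl : s = -t := (abs_eq_abs.mp h).resolve_left hst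
    have ht : t ≠ 0 := by rintro rfl; simp at hst
    rw [neg_add_cancel, zero_div, abs_zero, zero_rpow (by linarith)]
    positivity
  · have hmid := (strictConvexOn_rpow hq).2 (abs_nonneg s) (abs_nonneg t) h
      (by norm_num : (0 : ℝ) < 1 / 2) (by norm_num : (0 : ℝ) < 1 / 2) (by norm_num)
    simp only [smul_eq_mul] at hmid
    calc |(s + t) / 2| ^ q ≤ (1 / 2 * |s| + 1 / 2 * |t|) ^ q := by
          gcongr
          rw [abs_div, abs_two]
          linarith [abs_add_le s t]
      _ < (|s| ^ q + |t| ^ q) / 2 := by linarith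

lemma abs_add_div_two_rpow_le {q : ℝ} (hq : 1 < q) (s t : ℝ) :
    |(s + t) / 2| ^ q ≤ (|s| ^ q + |t| ^ q) / 2 := by
  rcases eq_or_ne s t with rfl | hst
  · rw [← two_mul, mul_div_cancel_left₀ _ two_ne_zero]; linarith
  · exact (abs_add_div_two_rpow_lt hq hst).le

theorem PiLp.strictConvexSpace_real {p : ENNReal} [Fact (1 ≤ p)] (hp : 1 < p.toReal)
    {ι : Type*} [Fintype ι] : StrictConvexSpace ℝ (PiLp p fun _ : ι => ℝ) := by
  have hp₀ : 0 < p.toReal := by linarith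
  have sum_eq_one (x : PiLp p fun _ : ι => ℝ) (hx : ‖x‖ = 1) :
      ∑ i, |x i| ^ p.toReal = 1 := by
    rw [PiLp.norm_eq_sum hp₀] at hx
    simp only [Real.norm_eq_abs] at hx
    rw [← rpow_inv_rpow (by positivity : 0 ≤ ∑ i, |x i| ^ p.toReal) hp₀.ne', ← one_div, hx,
      one_rpow]
  refine StrictConvexSpace.of_norm_combo_lt_one fun x y hx hy hxy =>
    ⟨1 / 2, 1 / 2, by norm_num, ?_⟩
  obtain ⟨j, hj⟩ : ∃ j, x j ≠ y j := by
    by_contra! h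
    exact hxy (WithLp.ofLp_injective p (funext h))
  have hsum : ∑ i, |(x i + y i) / 2| ^ p.toReal < 1 := calc
    ∑ i, |(x i + y i) / 2| ^ p.toReal < ∑ i, (|x i| ^ p.toReal + |y i| ^ p.toReal) / 2 :=
      Finset.sum_lt_sum (fun i _ => abs_add_div_two_rpow_le hp _ _)
        ⟨j, Finset.mem_univ j, abs_add_div_two_rpow_lt hp hj⟩
    _ = 1 := by
      rw [← Finset.sum_div, Finset.sum_add_distrib, sum_eq_one x hx, sum_eq_one y hy]
      norm_num
  rw [PiLp.norm_eq_sum hp₀]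
  refine rpow_lt_one (by positivity) ?_ (by positivity)
  convert hsum using 3 with i
  simp only [PiLp.add_apply, PiLp.smul_apply, smul_eq_mul, Real.norm_eq_abs]
  ring_nf

lemma mem_uIcc_or_mem_uIcc_or_mem_uIcc (a b c : ℝ) :
    b ∈ uIcc a c ∨ a ∈ uIcc b c ∨ c ∈ uIcc a b := by
  simp only [mem_uIcc]
  rcases le_total a b with h | h <;> rcases le_total b c with h' | h' <;>
    rcases le_total a c with h'' | h'' <;> tauto

lemma mem_uIoo_of_lt_of_lt {f : ℝ → ℝ} {I : Set ℝ} (hI : I.OrdConnected)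
    (hf : ContinuousOn f I) {c t₀ s t : ℝ} (hs : s ∈ I) (ht : t ∈ I)
    (hlevel : ∀ θ ∈ I, f θ = c → θ = t₀) (hfs : f s < c) (hft : c < f t) : t₀ ∈ uIoo s t := by
  obtain ⟨θ, hθ, hfθ⟩ := intermediate_value_uIcc (hf.mono (hI.uIcc_subset hs ht))
    (mem_uIcc.2 (Or.inl ⟨hfs.le, hft.le⟩))
  obtain rfl := hlevel θ (hI.uIcc_subset hs ht hθ) hfθ
  have hθs : θ ≠ s := by rintro rfl; exact hfs.ne hfθ
  have hθt : θ ≠ t := by rintro rfl; exact hft.ne' hfθ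
  rw [mem_uIcc] at hθ
  rw [uIoo, mem_Ioo]
  rcases hθ with ⟨h₁, h₂⟩ | ⟨h₁, h₂⟩
  · exact ⟨inf_le_left.trans_lt (h₁.lt_of_ne hθs.symm), (h₂.lt_of_ne hθt).trans_le le_sup_right⟩
  · exact ⟨inf_le_right.trans_lt (h₁.lt_of_ne hθt.symm), (h₂.lt_of_ne hθs).trans_le le_sup_left⟩

lemma exists_ker_le_span_singleton {E : Type*} [AddCommGroup E] [Module ℝ E]
    (hE : finrank ℝ E = 2) {d : E} (hd : d ≠ 0) :
    ∃ f : E →ₗ[ℝ] ℝ, LinearMap.ker f ≤ ℝ ∙ d := by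
  have : FiniteDimensional ℝ E := Module.finite_of_finrank_eq_succ hE
  have hlt : (ℝ ∙ d) < ⊤ := by
    refine lt_top_iff_ne_top.2 fun h => ?_
    have := congrArg (fun p : Submodule ℝ E => finrank ℝ p) h
    rw [finrank_span_singleton hd, finrank_top, hE] at this
    norm_num at this
  obtain ⟨f, hf, hle⟩ := Submodule.exists_le_ker_of_lt_top _ hlt
  refine ⟨f, (Submodule.eq_of_le_of_finrank_le hle ?_).ge⟩
  have hrange : 1 ≤ finrank ℝ (LinearMap.range f) :=
    Submodule.one_le_finrank_iff.2 (by rwa [Ne, LinearMap.range_eq_bot])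
  have := f.finrank_range_add_finrank_ker
  rw [finrank_span_singleton hd]
  omega

lemma mem_Theta {E : Type*} [NormedAddCommGroup E] {a b x : E} :
    x ∈ Theta a b ↔ ‖x‖ ≤ 1 ∧ ‖x - (a + b)‖ ≤ 1 := by
  simp only [Theta, mem_inter_iff, mem_closedBall, dist_zero_right, mem_image]
  constructor
  · rintro ⟨h₁, y, hy, rfl⟩
    exact ⟨h₁, by simpa using hy⟩
  · rintro ⟨h₁, h₂⟩
    exact ⟨h₁, x - (a + b), by simpa using h₂, by abel⟩

section NormedSpace

variable {E : Type*} [NormedAddCommGroup E] [NormedSpace ℝ E]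

lemma exists_max_norm_eq_one_lt_norm_sub {x u v : E} (hx : ‖x‖ ≤ 1) (hxu : ‖x - u‖ ≤ 1)
    (hxv : 1 < ‖x - v‖) : ∃ y, max ‖y‖ ‖y - u‖ = 1 ∧ 1 < ‖y - v‖ := by
  have hg : Continuous fun t : ℝ => max ‖x + t • (x - v)‖ ‖x + t • (x - v) - u‖ := by fun_prop
  have h₃ : 1 ≤ ‖x + (3 : ℝ) • (x - v)‖ := by
    have := norm_sub_norm_le ((3 : ℝ) • (x - v)) (-x)
    rw [sub_neg_eq_add, add_comm, norm_neg, norm_smul, Real.norm_of_nonneg (by norm_num)] at this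
    linarith
  obtain ⟨t, ht, hgt⟩ := intermediate_value_Icc (by norm_num : (0 : ℝ) ≤ 3) hg.continuousOn
    ⟨by simpa using max_le hx hxu, le_max_of_le_left h₃⟩
  refine ⟨x + t • (x - v), hgt, ?_⟩
  rw [show x + t • (x - v) - v = (1 + t) • (x - v) by module, norm_smul,
    Real.norm_of_nonneg (by linarith [ht.1])]
  nlinarith [ht.1]

lemma Theta_subset_Theta_of_inter_sphere_subset {a b c : E}
    (h₀ : Theta a b ∩ sphere 0 1 ⊆ Theta a c) (h₁ : Theta a b ∩ sphere (a + b) 1 ⊆ Theta a c) :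
    Theta a b ⊆ Theta a c := by
  intro x hx
  by_contra hxc
  rw [mem_Theta] at hx hxc
  obtain ⟨y, hy, hyc⟩ :=
    exists_max_norm_eq_one_lt_norm_sub hx.1 hx.2 (not_le.1 fun h => hxc ⟨hx.1, h⟩)
  have hyΘ : y ∈ Theta a b :=
    mem_Theta.2 ⟨(le_max_left _ _).trans hy.le, (le_max_right _ _).trans hy.le⟩
  refine hyc.not_ge (mem_Theta.1 ?_).2
  rcases max_choice ‖y‖ ‖y - (a + b)‖ with h | h <;> rw [h] at hy
  exacts [h₀ ⟨hyΘ, mem_sphere_zero_iff_norm.2 hy⟩, h₁ ⟨hyΘ, mem_sphere_iff_norm.2 hy⟩]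

section ArcParam

variable (φ : E ≃L[ℝ] ℂ) (a : E)

-- The minus sign puts `a` at `θ = π`, so that `Ioo (-π) π` covers the sphere minus `a`.
noncomputable def arcDir (θ : ℝ) : E := φ.symm (-φ a * Complex.exp (θ * Complex.I))

noncomputable def arcParam (θ : ℝ) : E := ‖arcDir φ a θ‖⁻¹ • arcDir φ a θ

noncomputable def arcAngle (w : E) : ℝ := Complex.arg (-φ w / φ a)

variable {φ a}

lemma arcDir_ne_zero (ha : a ≠ 0) (θ : ℝ) : arcDir φ a θ ≠ 0 := by
  simpa [arcDir, Complex.exp_ne_zero] using ha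

lemma norm_arcParam (ha : a ≠ 0) (θ : ℝ) : ‖arcParam φ a θ‖ = 1 := by
  rw [arcParam, norm_smul, norm_inv, norm_norm,
    inv_mul_cancel₀ (norm_ne_zero_iff.2 (arcDir_ne_zero ha θ))]

lemma continuous_arcParam (ha : a ≠ 0) : Continuous (arcParam φ a) := by
  have hdir : Continuous (arcDir φ a) := φ.symm.continuous.comp (by fun_prop)
  exact (hdir.norm.inv₀ fun θ => norm_ne_zero_iff.2 (arcDir_ne_zero ha θ)).smul hdir

lemma arcAngle_arcParam (ha : a ≠ 0) {θ : ℝ} (hθ : θ ∈ Ioc (-π) π) :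
    arcAngle φ a (arcParam φ a θ) = θ := by
  have hφa : φ a ≠ 0 := by simpa using ha
  have : -φ (arcParam φ a θ) / φ a = (‖arcDir φ a θ‖⁻¹ : ℝ) * Complex.exp (θ * Complex.I) := by
    simp only [arcParam, arcDir, map_smul, ContinuousLinearEquiv.apply_symm_apply,
      Complex.real_smul]
    field_simp
  rw [arcAngle, this, Complex.arg_real_mul _ (inv_pos.2 (norm_pos_iff.2 (arcDir_ne_zero ha θ))),
    Complex.arg_exp_mul_I, toIocMod_eq_self, show -π + 2 * π = π by ring]
  exact hθ

lemma arcParam_arcAngle (ha : a ≠ 0) {w : E} (hw : ‖w‖ = 1) :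
    arcParam φ a (arcAngle φ a w) = w := by
  have hφa : φ a ≠ 0 := by simpa using ha
  set ζ := -φ w / φ a with hζ
  have hζ₀ : 0 < ‖ζ‖ := by
    have hw₀ : w ≠ 0 := by rw [← norm_ne_zero_iff, hw]; exact one_ne_zero
    simp [ζ, hφa, hw₀]
  have hdir : arcDir φ a ζ.arg = ‖ζ‖⁻¹ • w := by
    have hexp : Complex.exp (ζ.arg * Complex.I) = ζ / ‖ζ‖ := by
      rw [eq_div_iff (by exact_mod_cast hζ₀.ne'), mul_comm]
      exact Complex.norm_mul_exp_arg_mul_I ζ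
    rw [arcDir, ContinuousLinearEquiv.symm_apply_eq, hexp, map_smul, Complex.real_smul, hζ]
    push_cast
    field_simp
  simp only [arcParam, arcAngle, ← hζ, hdir, norm_smul, norm_inv, norm_norm, hw, mul_one,
    inv_inv, smul_smul, mul_inv_cancel₀ hζ₀.ne', one_smul]

lemma arcAngle_self (ha : a ≠ 0) : arcAngle φ a a = π := by
  have hφa : φ a ≠ 0 := by simpa using ha
  simp [arcAngle, neg_div, div_self hφa, Complex.arg_neg_one]

theorem bijOn_arcParam (ha : ‖a‖ = 1) :
    BijOn (arcParam φ a) (Ioo (-π) π) (sphere 0 1 \ {a}) := by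
  have ha₀ : a ≠ 0 := by rw [← norm_ne_zero_iff, ha]; exact one_ne_zero
  refine InvOn.bijOn (f' := arcAngle φ a)
    ⟨fun θ hθ => arcAngle_arcParam ha₀ (Ioo_subset_Ioc_self hθ),
      fun w hw => arcParam_arcAngle ha₀ (mem_sphere_zero_iff_norm.1 hw.1)⟩ ?_ ?_
  · refine fun θ hθ => ⟨mem_sphere_zero_iff_norm.2 (norm_arcParam ha₀ θ), fun h => hθ.2.ne ?_⟩
    rw [← arcAngle_arcParam ha₀ (Ioo_subset_Ioc_self hθ), mem_singleton_iff.1 h,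
      arcAngle_self ha₀]
  · refine fun w hw =>
      ⟨Complex.neg_pi_lt_arg _, (Complex.arg_le_pi _).lt_of_ne fun h => hw.2 ?_⟩
    rw [← arcParam_arcAngle ha₀ (mem_sphere_zero_iff_norm.1 hw.1), mem_singleton_iff, arcAngle,
      h, ← arcAngle_self ha₀, arcParam_arcAngle ha₀ ha]

end ArcParam

theorem exists_continuous_bijOn_Ioo_sphere_diff (hE : finrank ℝ E = 2) {a : E} (ha : ‖a‖ = 1) :
    ∃ γ : ℝ → E, Continuous γ ∧ BijOn γ (Ioo (-π) π) (sphere 0 1 \ {a}) := by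
  have : FiniteDimensional ℝ E := Module.finite_of_finrank_eq_succ hE
  let φ : E ≃L[ℝ] ℂ := .ofFinrankEq (hE.trans Complex.finrank_real_complex.symm)
  exact ⟨arcParam φ a, continuous_arcParam (norm_ne_zero_iff.1 (by rw [ha]; exact one_ne_zero)),
    bijOn_arcParam ha⟩

end NormedSpace

section StrictConvexSpace

variable {E : Type*} [NormedAddCommGroup E] [NormedSpace ℝ E] [StrictConvexSpace ℝ E]

lemma norm_add_smul_lt_one_of_lt_of_lt {x d : E} (hd : d ≠ 0) {r s t : ℝ} (hrs : r < s)
    (hst : s < t) (hr : ‖x + r • d‖ ≤ 1) (ht : ‖x + t • d‖ ≤ 1) : ‖x + s • d‖ < 1 := by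
  have hne : x + r • d ≠ x + t • d := fun h =>
    (hrs.trans hst).ne (smul_left_injective ℝ hd (add_left_cancel h))
  have htr : t - r ≠ 0 := by linarith
  have h₁ : (t - s) / (t - r) + (s - r) / (t - r) = 1 := by field_simp; ring
  have h₂ : (t - s) / (t - r) * r + (s - r) / (t - r) * t = s := by field_simp; ring
  have := norm_combo_lt_of_ne hr ht hne (div_pos (by linarith) (by linarith))
    (div_pos (by linarith) (by linarith)) h₁
  convert this using 2
  linear_combination (norm := module) (-h₁) • x - h₂ • d

lemma mem_Icc_of_norm_add_smul_le_one {x d : E} (hd : d ≠ 0) (hx : ‖x‖ = 1)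
    (hxd : ‖x - d‖ = 1) {t : ℝ} (ht : ‖x + t • d‖ ≤ 1) : t ∈ Icc (-1) 0 := by
  have hx' : ‖x + (0 : ℝ) • d‖ = 1 := by simpa using hx
  have hxd' : ‖x + (-1 : ℝ) • d‖ = 1 := by simpa [← sub_eq_add_neg] using hxd
  constructor
  · by_contra! h
    exact (norm_add_smul_lt_one_of_lt_of_lt hd h (by norm_num) ht hx'.le).ne hxd'
  · by_contra! h
    exact (norm_add_smul_lt_one_of_lt_of_lt hd (by norm_num) h hxd'.le ht).ne hx'

lemma eq_or_eq_of_map_mem_uIcc {f : E →ₗ[ℝ] ℝ} {d : E} (hd : d ≠ 0)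
    (hf : LinearMap.ker f ≤ ℝ ∙ d) {x₁ x₂ x₃ : E} (h₁ : x₁ ∈ sphere 0 1 ∩ sphere d 1)
    (h₂ : x₂ ∈ sphere 0 1 ∩ sphere d 1) (h₃ : x₃ ∈ sphere 0 1 ∩ sphere d 1)
    (h : f x₂ ∈ uIcc (f x₁) (f x₃)) : x₂ = x₁ ∨ x₂ = x₃ := by
  obtain ⟨P, hP, hfP⟩ : ∃ P ∈ segment ℝ x₁ x₃, f P = f x₂ := by
    rwa [← segment_eq_uIcc, ← LinearMap.coe_toAffineMap, ← image_segment] at h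
  have hPB : P ∈ closedBall 0 1 ∩ closedBall d 1 :=
    (convex_closedBall _ _).inter (convex_closedBall _ _) |>.segment_subset
      (inter_subset_inter sphere_subset_closedBall sphere_subset_closedBall h₁)
      (inter_subset_inter sphere_subset_closedBall sphere_subset_closedBall h₃) hP
  -- `P` lies on the line `x₂ + ℝ d`, which meets both balls only at `x₂`
  obtain ⟨t, ht⟩ := Submodule.mem_span_singleton.1
    (hf (show P - x₂ ∈ LinearMap.ker f by simp [hfP]))
  rw [mem_inter_iff, mem_sphere_zero_iff_norm, mem_sphere_iff_norm] at h₂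
  rw [mem_inter_iff, mem_closedBall_zero_iff, mem_closedBall_iff_norm] at hPB
  have ht₀ := mem_Icc_of_norm_add_smul_le_one hd h₂.1 h₂.2 (t := t) (by
    rw [ht, add_sub_cancel]; exact hPB.1)
  have ht₁ := mem_Icc_of_norm_add_smul_le_one hd h₂.1 h₂.2 (t := t - 1) (by
    rw [sub_smul, one_smul, ht, ← add_sub_assoc, add_sub_cancel]; exact hPB.2)
  obtain rfl : P = x₂ := by
    rw [← sub_eq_zero, ← ht, show t = 0 by linarith [ht₀.2, ht₁.1], zero_smul]
  rcases eq_or_ne x₁ x₃ with rfl | h₁₃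
  · rw [segment_same, mem_singleton_iff] at hP
    exact Or.inl hP
  by_contra! hne
  have hlt := (strictConvex_closedBall ℝ (0 : E) 1).openSegment_subset
    (sphere_subset_closedBall h₁.1) (sphere_subset_closedBall h₃.1) h₁₃
    (mem_openSegment_of_ne_left_right hne.1.symm hne.2.symm hP)
  rw [interior_closedBall _ one_ne_zero, mem_ball_zero_iff] at hlt
  exact hlt.ne h₂.1

theorem eq_or_eq_of_mem_sphere_inter_sphere (hE : finrank ℝ E = 2) {d : E} (hd : d ≠ 0)
    {x y z : E} (hx : x ∈ sphere 0 1 ∩ sphere d 1) (hy : y ∈ sphere 0 1 ∩ sphere d 1)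
    (hz : z ∈ sphere 0 1 ∩ sphere d 1) (hxy : x ≠ y) : z = x ∨ z = y := by
  obtain ⟨f, hf⟩ := exists_ker_le_span_singleton hE hd
  rcases mem_uIcc_or_mem_uIcc_or_mem_uIcc (f x) (f z) (f y) with h | h | h
  · exact eq_or_eq_of_map_mem_uIcc hd hf hx hz hy h
  · exact .inl ((eq_or_eq_of_map_mem_uIcc hd hf hz hx hy h).resolve_right hxy).symm
  · exact .inr ((eq_or_eq_of_map_mem_uIcc hd hf hx hy hz h).resolve_left hxy.symm).symm

theorem sphere_inter_sphere_add_subset (hE : finrank ℝ E = 2) {a b : E} (ha : ‖a‖ = 1)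
    (hb : ‖b‖ = 1) (hab : a ≠ b) (hab' : a + b ≠ 0) :
    sphere 0 1 ∩ sphere (a + b) 1 ⊆ {a, b} := fun _ hx =>
  eq_or_eq_of_mem_sphere_inter_sphere hE hab'
    ⟨mem_sphere_zero_iff_norm.2 ha, by simp [mem_sphere_iff_norm, hb]⟩
    ⟨mem_sphere_zero_iff_norm.2 hb, by simp [mem_sphere_iff_norm, ha]⟩ hx hab

lemma eq_neg_of_norm_add_add_le_one {a c : E} (ha : ‖a‖ = 1) (hc : ‖c‖ = 1)
    (h : ‖a + a + c‖ ≤ 1) : c = -a := by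
  have h₂ : ‖a + a‖ = 2 := by rw [← two_smul ℝ, norm_smul, ha]; norm_num
  have h₁ : ‖a + a + c‖ = 1 := le_antisymm h (by
    have := norm_sub_le (a + a + c) c
    rw [add_sub_cancel_right, h₂, hc] at this
    linarith)
  have h₃ : a + a + c = -c := eq_of_norm_eq_of_norm_add_eq (by rw [h₁, norm_neg, hc])
    (by rw [add_neg_cancel_right, h₂, h₁, norm_neg, hc]; norm_num)
  have h₄ : (2 : ℝ) • (a + c) = 0 := by rw [two_smul]; linear_combination (norm := module) h₃
  rw [eq_neg_iff_add_eq_zero, add_comm]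
  exact (smul_eq_zero.1 h₄).resolve_left two_ne_zero

lemma norm_sub_add_le_one_of_lt_of_lt_of_lt (hE : finrank ℝ E = 2) {a b c z : E}
    (ha : ‖a‖ = 1) (hb : ‖b‖ = 1) (hc : ‖c‖ = 1) (hz : ‖z‖ = 1) (hab : a ≠ b) (hac : a ≠ c)
    (hab' : a + b ≠ 0) (hac' : a + c ≠ 0) (hbC : ‖b - (a + c)‖ < 1)
    (hcB : 1 < ‖c - (a + b)‖) (hzB : ‖z - (a + b)‖ < 1) : ‖z - (a + c)‖ ≤ 1 := by
  by_contra! hzC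
  have hza : z ≠ a := by rintro rfl; simp [hc] at hzC
  obtain ⟨γ, hγ, hbij⟩ := exists_continuous_bijOn_Ioo_sphere_diff hE ha
  obtain ⟨θb, hθb, rfl⟩ := hbij.surjOn ⟨mem_sphere_zero_iff_norm.2 hb, hab.symm⟩
  obtain ⟨θc, hθc, rfl⟩ := hbij.surjOn ⟨mem_sphere_zero_iff_norm.2 hc, hac.symm⟩
  obtain ⟨θz, hθz, rfl⟩ := hbij.surjOn ⟨mem_sphere_zero_iff_norm.2 hz, hza⟩
  have crossing : ∀ θ₀ ∈ Ioo (-π) π, a + γ θ₀ ≠ 0 →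
      ∀ θ ∈ Ioo (-π) π, ‖γ θ - (a + γ θ₀)‖ = 1 → θ = θ₀ := by
    intro θ₀ hθ₀ h₀ θ hθ h
    have hγθ := hbij.mapsTo hθ
    have hγθ₀ := hbij.mapsTo hθ₀
    rcases sphere_inter_sphere_add_subset hE ha (mem_sphere_zero_iff_norm.1 hγθ₀.1)
      (Ne.symm hγθ₀.2) h₀ ⟨hγθ.1, mem_sphere_iff_norm.2 h⟩ with h' | h'
    · exact absurd h' hγθ.2
    · exact hbij.injOn hθ hθ₀ h'
  have hcont (v : E) : ContinuousOn (fun θ => ‖γ θ - v‖) (Ioo (-π) π) :=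
    (hγ.sub continuous_const).norm.continuousOn
  have hb_between := mem_uIoo_of_lt_of_lt ordConnected_Ioo (hcont _) hθz hθc
    (crossing θb hθb hab') hzB hcB
  have hc_between := mem_uIoo_of_lt_of_lt ordConnected_Ioo (hcont _) hθb hθz
    (crossing θc hθc hac') hbC hzC
  simp only [uIoo, mem_Ioo] at hb_between hc_between
  rcases le_total θz θc with h | h <;> rcases le_total θb θz with h' | h' <;> simp_all <;>
    linarith

theorem Theta_inter_sphere_subset (hE : finrank ℝ E = 2) {a b c : E} (ha : ‖a‖ = 1)
    (hb : ‖b‖ = 1) (hc : ‖c‖ = 1) (hab : a ≠ b) (hac : a ≠ c) (hbc : b ≠ c)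
    (hbΘ : b ∈ Theta a c) : Theta a b ∩ sphere 0 1 ⊆ Theta a c := by
  rintro z ⟨hzΘ, hz⟩
  rw [mem_sphere_zero_iff_norm] at hz
  rw [mem_Theta] at hbΘ hzΘ ⊢
  refine ⟨hzΘ.1, ?_⟩
  rcases eq_or_ne (a + c) 0 with hac' | hac'
  · simpa [hac'] using hzΘ.1
  have hab' : a + b ≠ 0 := by
    intro h
    obtain rfl : b = -a := eq_neg_of_add_eq_zero_right h
    have h₂ := hbΘ.2
    rw [show -a - (a + c) = -(a + a + c) by abel, norm_neg] at h₂
    exact hac' (by rw [eq_neg_of_norm_add_add_le_one ha hc h₂, add_neg_cancel])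
  have hbC : ‖b - (a + c)‖ < 1 := hbΘ.2.lt_of_ne fun h => by
    rcases sphere_inter_sphere_add_subset hE ha hc hac hac'
      ⟨mem_sphere_zero_iff_norm.2 hb, mem_sphere_iff_norm.2 h⟩ with h' | h'
    exacts [hab h'.symm, hbc h']
  by_contra! hzC
  have hzB : ‖z - (a + b)‖ < 1 := hzΘ.2.lt_of_ne fun h => by
    rcases sphere_inter_sphere_add_subset hE ha hb hab hab'
      ⟨mem_sphere_zero_iff_norm.2 hz, mem_sphere_iff_norm.2 h⟩ with rfl | rfl
    · simp [hc] at hzC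
    · exact hbC.not_gt hzC
  have hcB : 1 < ‖c - (a + b)‖ := by
    refine lt_of_le_of_ne ?_ fun h => ?_
    · have := norm_add_le ((a + b) - c) ((a + c) - b)
      rw [show (a + b) - c + ((a + c) - b) = (2 : ℝ) • a by module, norm_smul, ha,
        norm_sub_rev, norm_sub_rev (a + c)] at this
      norm_num at this
      linarith
    · rcases sphere_inter_sphere_add_subset hE ha hb hab hab'
        ⟨mem_sphere_zero_iff_norm.2 hc, mem_sphere_iff_norm.2 h.symm⟩ with h' | h'
      exacts [hac h'.symm, hbc h'.symm]
  exact hzC.not_ge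
    (norm_sub_add_le_one_of_lt_of_lt_of_lt hE ha hb hc hz hab hac hab' hac' hbC hcB hzB)

theorem Theta_inter_sphere_add_subset (hE : finrank ℝ E = 2) {a b c : E} (ha : ‖a‖ = 1)
    (hb : ‖b‖ = 1) (hc : ‖c‖ = 1) (hab : a ≠ b) (hac : a ≠ c) (hbc : b ≠ c)
    (hbΘ : b ∈ Theta a c) : Theta a b ∩ sphere (a + b) 1 ⊆ Theta a c := by
  rintro y ⟨hyΘ, hy⟩
  rw [mem_sphere_iff_norm] at hy
  rw [mem_Theta] at hbΘ hyΘ ⊢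
  refine ⟨hyΘ.1, ?_⟩
  rcases eq_or_ne c (-a) with rfl | hca
  · simpa using hyΘ.1
  have hbc' : b ≠ -c := by
    rintro rfl
    have h₂ := hbΘ.2
    rw [show -c - (a + c) = -(c + c + a) by abel, norm_neg] at h₂
    exact hca (neg_eq_iff_eq_neg.2 (eq_neg_of_norm_add_add_le_one hc ha h₂)).symm
  -- the point reflection `x ↦ a + b - x` preserves `Θ_{a,b}` and swaps its two bounding spheres
  have hy' : a + b - y ∈ Theta b a ∩ sphere 0 1 := by
    rw [mem_inter_iff, mem_Theta, mem_sphere_zero_iff_norm, norm_sub_rev, hy,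
      show a + b - y - (b + a) = -y by abel, norm_neg]
    exact ⟨⟨le_rfl, hyΘ.1⟩, rfl⟩
  have haΘ : a ∈ Theta b (-c) := by
    rw [mem_Theta, show a - (b + -c) = -(b - (a + c)) by abel, norm_neg]
    exact ⟨ha.le, hbΘ.2⟩
  have := Theta_inter_sphere_subset hE hb ha (by rwa [norm_neg]) hab.symm hbc'
    (fun h => hca (neg_eq_iff_eq_neg.2 h).symm) haΘ hy'
  rw [mem_Theta, show a + b - y - (b + -c) = -(y - (a + c)) by abel, norm_neg] at this
  exact this.2

end StrictConvexSpace

theorem Theta_subset_Theta (p : ℝ) (hp : 1 < p) [Fact (1 ≤ ENNReal.ofReal p)]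
    (a b c : PiLp (ENNReal.ofReal p) (fun _ : Fin 2 => ℝ))
    (hanorm : ‖a‖ = 1) (hbnorm : ‖b‖ = 1) (hcnorm : ‖c‖ = 1)
    (hab : a ≠ b) (hac : a ≠ c) (hbc : b ≠ c)
    (hb : b ∈ Theta a c) :
    Theta a b ⊆ Theta a c := by
  have : StrictConvexSpace ℝ (PiLp (ENNReal.ofReal p) fun _ : Fin 2 => ℝ) :=
    PiLp.strictConvexSpace_real (by rwa [ENNReal.toReal_ofReal (by linarith)])
  have hE : finrank ℝ (PiLp (ENNReal.ofReal p) fun _ : Fin 2 => ℝ) = 2 := by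
    rw [(WithLp.linearEquiv _ ℝ (Fin 2 → ℝ)).finrank_eq]; simp
  exact Theta_subset_Theta_of_inter_sphere_subset
    (Theta_inter_sphere_subset hE hanorm hbnorm hcnorm hab hac hbc hb)
    (Theta_inter_sphere_add_subset hE hanorm hbnorm hcnorm hab hac hbc hb)
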